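/- Let ρ = l → r be a linear term rewrite rule and s a linear term. If the rule encoding ρ° is applied at position p in the term encoding s° and this gives rise to PBPO+ rewrite steps s° ⇒_{ρ°} G and s° ⇒_{ρ°} G' (both at position p), then G and G' are isomorphic. -/

import Mathlib

open CategoryTheory
open Classical

noncomputable section

/-- Labeled graphs over a label type `W`. -/
structure LGraph (W : Type) : Type 1 where
  V : Type
  E : Type
  src : E → V
  tgt : E → V
  lV : V → W
  lE : E → W

section Cat

variable {W : Type} [Preorder W]

/-- Label-nondecreasing graph premorphisms: the morphisms of the category `Graph^(L,≤)`. -/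
structure GLHom (G H : LGraph W) : Type where
  onV : G.V → H.V
  onE : G.E → H.E
  src_comm : ∀ e, H.src (onE e) = onV (G.src e)
  tgt_comm : ∀ e, H.tgt (onE e) = onV (G.tgt e)
  lV_le : ∀ v, G.lV v ≤ H.lV (onV v)
  lE_le : ∀ e, G.lE e ≤ H.lE (onE e)

theorem GLHom.ext' {G H : LGraph W} {f g : GLHom G H}
    (h1 : f.onV = g.onV) (h2 : f.onE = g.onE) : f = g := by
  cases f; cases g
  cases h1; cases h2
  rfl

/-- The category `Graph^(L,≤)` of labeled graphs over a preordered label set. -/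
instance : Category (LGraph W) where
  Hom G H := GLHom G H
  id G := { onV := id, onE := id, src_comm := fun _ => rfl, tgt_comm := fun _ => rfl,
            lV_le := fun _ => le_refl _, lE_le := fun _ => le_refl _ }
  comp f g :=
    { onV := g.onV ∘ f.onV
      onE := g.onE ∘ f.onE
      src_comm := fun e => by
        simp only [Function.comp_apply, g.src_comm, f.src_comm]
      tgt_comm := fun e => by
        simp only [Function.comp_apply, g.tgt_comm, f.tgt_comm]
      lV_le := fun v => le_trans (f.lV_le v) (g.lV_le _)
      lE_le := fun e => le_trans (f.lE_le e) (g.lE_le _) }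
  id_comp f := GLHom.ext' rfl rfl
  comp_id f := GLHom.ext' rfl rfl
  assoc f g h := GLHom.ext' rfl rfl

/-- Vertex map of a morphism. -/
abbrev homV {G H : LGraph W} (f : G ⟶ H) : G.V → H.V := GLHom.onV f

/-- Edge map of a morphism. -/
abbrev homE {G H : LGraph W} (f : G ⟶ H) : G.E → H.E := GLHom.onE f

end Cat

/-- A graph is finite if it has finitely many vertices and edges. -/
def FiniteG {W : Type} (G : LGraph W) : Prop := Finite G.V ∧ Finite G.E
/-- The flat lattice on a base label set `A`: a global minimum `⊥`, a global
maximum `⊤`, and all elements of `A` pairwise incomparable. -/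
inductive Flat (A : Type) : Type
  | bot : Flat A
  | el : A → Flat A
  | top : Flat A

namespace Flat

def le {A : Type} : Flat A → Flat A → Prop
  | bot, _ => True
  | _, top => True
  | el a, el b => a = b
  | _, _ => False

instance (A : Type) : Preorder (Flat A) where
  le := Flat.le
  le_refl a := by cases a <;> trivial
  le_trans a b c hab hbc := by
    cases a <;> cases b <;> cases c <;> simp_all [Flat.le]

theorem bot_le {A : Type} (a : Flat A) : (Flat.bot : Flat A) ≤ a := by
  show Flat.le Flat.bot a
  cases a <;> trivial

theorem le_top {A : Type} (a : Flat A) : a ≤ (Flat.top : Flat A) := by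
  show Flat.le a Flat.top
  cases a <;> trivial

theorem le_cases {A : Type} {a b : Flat A} (h : a = Flat.bot ∨ b = Flat.top) : a ≤ b := by
  rcases h with h | h
  · subst h; exact bot_le _
  · subst h; exact le_top _

end Flat

/-- The flat lattice `Σ°` induced by a signature `S` together with the
positive natural numbers (used as edge labels). -/
abbrev FlatL (S : Type) := Flat (S ⊕ ℕ+)
/-- First-order terms over a signature `S` with arity function `ar` and
variable set `X`. -/
inductive Term (S : Type) (ar : S → ℕ) (X : Type) : Type
  | var : X → Term S ar X
  | app : (f : S) → (Fin (ar f) → Term S ar X) → Term S ar X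

namespace Term

variable {S : Type} {ar : S → ℕ} {X : Type}

/-- The subterm of `t` at a position (a list of (0-based) child indices),
if the position exists in `t`. -/
def sub? : Term S ar X → List ℕ → Option (Term S ar X)
  | t, [] => some t
  | .var _, _ :: _ => none
  | .app f ts, i :: p => if h : i < ar f then sub? (ts ⟨i, h⟩) p else none

/-- The set of variables occurring in a term. -/
def vars (t : Term S ar X) : Set X := {x | ∃ p, t.sub? p = some (.var x)}

/-- A term is linear if every variable occurs at most once in it. -/
def Linear (t : Term S ar X) : Prop :=
  ∀ x p q, t.sub? p = some (.var x) → t.sub? q = some (.var x) → p = q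

/-- The head symbol of a term, if any. -/
def head? : Term S ar X → Option S
  | .var _ => none
  | .app f _ => some f

/-- The function symbol at position `p` of `t`, if any. -/
def symAt (t : Term S ar X) (p : List ℕ) : Option S := (t.sub? p).bind head?

theorem sub?_append (t : Term S ar X) (p q : List ℕ) :
    t.sub? (p ++ q) = (t.sub? p).bind (fun s => s.sub? q) := by
  induction p generalizing t with
  | nil => simp [sub?]
  | cons i p ih =>
    cases t with
    | var x => simp [sub?]
    | app f ts =>
      show sub? (.app f ts) (i :: (p ++ q)) = _
      simp only [sub?]
      by_cases h : i < ar f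
      · simp [h, ih]
      · simp [h]

theorem symAt_sub (t : Term S ar X) {p : List ℕ} {f : S} (h : t.symAt p = some f) :
    ∃ ts : Fin (ar f) → Term S ar X, t.sub? p = some (.app f ts) := by
  unfold symAt at h
  cases hs : t.sub? p with
  | none => rw [hs] at h; simp at h
  | some s =>
    rw [hs] at h
    cases s with
    | var x => simp [head?] at h
    | app g ts =>
      simp [head?] at h
      subst h
      exact ⟨ts, rfl⟩

theorem edge_sub?_isSome (t : Term S ar X) {p : List ℕ} {i : ℕ}
    (h : ∃ f, t.symAt p = some f ∧ i < ar f) :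
    ∃ s, t.sub? (p ++ [i]) = some s := by
  obtain ⟨f, hf, hi⟩ := h
  obtain ⟨ts, hts⟩ := t.symAt_sub hf
  refine ⟨ts ⟨i, hi⟩, ?_⟩
  rw [sub?_append, hts]
  simp [sub?, hi]

theorem edge_tgt_var (t : Term S ar X) {p : List ℕ} {i : ℕ}
    (h : ∃ f, t.symAt p = some f ∧ i < ar f)
    (hn : ¬ (t.symAt (p ++ [i])).isSome) :
    ∃ x, t.sub? (p ++ [i]) = some (.var x) := by
  obtain ⟨s, hs⟩ := t.edge_sub?_isSome h
  cases s with
  | var x => exact ⟨x, hs⟩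
  | app g ts => exact absurd (by simp [symAt, hs, head?]) hn

theorem root_var (t : Term S ar X) (h : ¬ (t.symAt []).isSome) :
    ∃ x, t.sub? [] = some (.var x) := by
  cases t with
  | var x => exact ⟨x, rfl⟩
  | app f ts => exact absurd (by simp [symAt, sub?, head?]) h

/-- Vertices of the term encoding: symbol vertices (named by their position)
and variable heads (named by their variable). -/
def encV (t : Term S ar X) : Type :=
  {p : List ℕ // (t.symAt p).isSome} ⊕ {x : X // x ∈ t.vars}

/-- Edges of the term encoding: pairs of a symbol position and a child index. -/
def encE (t : Term S ar X) : Type :=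
  {pi : List ℕ × ℕ // ∃ f, t.symAt pi.1 = some f ∧ pi.2 < ar f}

/-- Target of an edge of the term encoding. -/
noncomputable def encTgt (t : Term S ar X) (e : t.encE) : t.encV :=
  if h : (t.symAt (e.1.1 ++ [e.1.2])).isSome then Sum.inl ⟨e.1.1 ++ [e.1.2], h⟩
  else Sum.inr ⟨Classical.choose (t.edge_tgt_var e.2 h),
    ⟨e.1.1 ++ [e.1.2], Classical.choose_spec (t.edge_tgt_var e.2 h)⟩⟩

/-- The term encoding `t°` of a term `t` as a `Σ°`-labeled graph. -/
noncomputable def enc (t : Term S ar X) : LGraph (FlatL S) where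
  V := t.encV
  E := t.encE
  src e := Sum.inl ⟨e.1.1, by obtain ⟨f, hf, _⟩ := e.2; simp [hf]⟩
  tgt := t.encTgt
  lV v := match v with
    | .inl q => (t.symAt q.1).elim Flat.bot (fun f => Flat.el (Sum.inl f))
    | .inr _ => Flat.bot
  lE e := Flat.el (Sum.inr ⟨e.1.2 + 1, Nat.succ_pos _⟩)

/-- The root of the term encoding (the vertex at position `ε`). -/
noncomputable def encRoot (t : Term S ar X) : t.encV :=
  if h : (t.symAt []).isSome then Sum.inl ⟨[], h⟩
  else Sum.inr ⟨Classical.choose (t.root_var h), ⟨[], Classical.choose_spec (t.root_var h)⟩⟩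

/-- `t.encVertAt p v` says that `v` is the vertex at position `p` in the term
encoding `t°`. -/
def encVertAt (t : Term S ar X) (p : List ℕ) : t.encV → Prop
  | .inl q => q.1 = p
  | .inr x => t.sub? p = some (.var x.1)

/-- The set of variable heads of a term encoding. -/
def varHeads (t : Term S ar X) : Set t.encV := Set.range Sum.inr

/-- Applying a substitution to a term. -/
def subst (σ : X → Term S ar X) : Term S ar X → Term S ar X
  | .var x => σ x
  | .app f ts => .app f (fun i => subst σ (ts i))

end Term

/-- One-hole contexts over a signature. `app f i ts C` is the context
`f(ts 0, …, C, …, ts (n-1))` with `C` at argument position `i`. -/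
inductive Ctx (S : Type) (ar : S → ℕ) (X : Type) : Type
  | hole : Ctx S ar X
  | app : (f : S) → (i : Fin (ar f)) → (Fin (ar f) → Term S ar X) → Ctx S ar X → Ctx S ar X

namespace Ctx

variable {S : Type} {ar : S → ℕ} {X : Type}

/-- Replacing the hole of a context by a term. -/
def fill : Ctx S ar X → Term S ar X → Term S ar X
  | .hole, t => t
  | .app f i ts C, t => .app f (Function.update ts i (C.fill t))

/-- The position of the hole of a context. -/
def holePos : Ctx S ar X → List ℕ
  | .hole => []
  | .app _ i _ C => (i : ℕ) :: C.holePos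

end Ctx

/-- A term rewrite rule `lhs → rhs`: `lhs` is not a variable and all variables
of `rhs` occur in `lhs`. -/
structure TRSRule (S : Type) (ar : S → ℕ) (X : Type) : Type where
  lhs : Term S ar X
  rhs : Term S ar X
  lhs_not_var : ∀ x, lhs ≠ Term.var x
  var_cond : rhs.vars ⊆ lhs.vars

namespace TRSRule

variable {S : Type} {ar : S → ℕ} {X : Type}

/-- A rule is linear if both sides are linear terms. -/
def Linear (ρ : TRSRule S ar X) : Prop := ρ.lhs.Linear ∧ ρ.rhs.Linear

/-- The rewrite step relation generated by a single rule. -/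
def Step (ρ : TRSRule S ar X) (s t : Term S ar X) : Prop :=
  ∃ (C : Ctx S ar X) (σ : X → Term S ar X),
    s = C.fill (ρ.lhs.subst σ) ∧ t = C.fill (ρ.rhs.subst σ)

/-- The rewrite step relation of a rule at a fixed position `p`. -/
def StepAt (ρ : TRSRule S ar X) (p : List ℕ) (s t : Term S ar X) : Prop :=
  ∃ (C : Ctx S ar X) (σ : X → Term S ar X),
    C.holePos = p ∧ s = C.fill (ρ.lhs.subst σ) ∧ t = C.fill (ρ.rhs.subst σ)

end TRSRule

/-- The rewrite relation of a term rewriting system. -/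
def TStep {S : Type} {ar : S → ℕ} {X : Type} (Rs : Set (TRSRule S ar X))
    (s t : Term S ar X) : Prop :=
  ∃ ρ ∈ Rs, ρ.Step s t
section Closures

variable {A : Type}

/-- Upper context closure `C[G]` of a graph rooted at `r`: adds a `⊤`-labeled
context vertex with a `⊤`-labeled edge to the root and a `⊤`-labeled loop. -/
def upperCC (G : LGraph (Flat A)) (r : G.V) : LGraph (Flat A) where
  V := G.V ⊕ Unit
  E := G.E ⊕ Bool
  src e := match e with
    | .inl e => .inl (G.src e)
    | .inr _ => .inr ()
  tgt e := match e with
    | .inl e => .inl (G.tgt e)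
    | .inr true => .inl r
    | .inr false => .inr ()
  lV v := match v with
    | .inl v => G.lV v
    | .inr _ => Flat.top
  lE e := match e with
    | .inl e => G.lE e
    | .inr _ => Flat.top

/-- Lower context closure `G↓_Xs`: relabels every vertex in `Xs` to `⊤` and
adds for it a fresh `⊤`-labeled vertex `x'` with a `⊤`-labeled edge `x → x'`
and a `⊤`-labeled loop on `x'`. -/
noncomputable def lowerCC (G : LGraph (Flat A)) (Xs : Set G.V) : LGraph (Flat A) where
  V := G.V ⊕ Xs
  E := G.E ⊕ (Xs ⊕ Xs)
  src e := match e with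
    | .inl e => .inl (G.src e)
    | .inr (.inl x) => .inl x.1
    | .inr (.inr x) => .inr x
  tgt e := match e with
    | .inl e => .inl (G.tgt e)
    | .inr (.inl x) => .inr x
    | .inr (.inr x) => .inr x
  lV v := match v with
    | .inl v => if v ∈ Xs then Flat.top else G.lV v
    | .inr _ => Flat.top
  lE e := match e with
    | .inl e => G.lE e
    | .inr _ => Flat.top

/-- The context closure `C[G↓_Xs]` of a rooted graph. -/
noncomputable def ctxCC (G : LGraph (Flat A)) (r : G.V) (Xs : Set G.V) : LGraph (Flat A) :=
  upperCC (lowerCC G Xs) (Sum.inl r)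

theorem ctxCC_lV_inl (G : LGraph (Flat A)) (r : G.V) (Xs : Set G.V) (v : G.V) :
    (ctxCC G r Xs).lV (Sum.inl (Sum.inl v)) = if v ∈ Xs then Flat.top else G.lV v := rfl

/-- The typing morphism `G ↣ C[G↓_Xs]` (an inclusion). -/
noncomputable def tCC (G : LGraph (Flat A)) (r : G.V) (Xs : Set G.V) :
    GLHom G (ctxCC G r Xs) where
  onV v := Sum.inl (Sum.inl v)
  onE e := Sum.inl (Sum.inl e)
  src_comm e := rfl
  tgt_comm e := rfl
  lV_le v := by
    rw [ctxCC_lV_inl]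
    split
    · exact Flat.le_top _
    · exact le_refl _
  lE_le e := le_refl _

end Closures

/-- The interface graph `I(t)` of a term `t`: a discrete graph with
`⊥`-labeled vertices `Var(t) ∪ {ε}`. -/
def interfaceG {S : Type} {ar : S → ℕ} {X : Type} (t : Term S ar X) : LGraph (FlatL S) where
  V := {x : X // x ∈ t.vars} ⊕ Unit
  E := Empty
  src e := e.elim
  tgt e := e.elim
  lV _ := Flat.bot
  lE e := e.elim

/-- The variable vertices of an interface graph. -/
def interfaceVars {S : Type} {ar : S → ℕ} {X : Type} (t : Term S ar X) :
    Set (interfaceG t).V := Set.range Sum.inl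
/-- A PBPO⁺ rewrite rule. -/
structure PBPORule (W : Type) [Preorder W] : Type 1 where
  L : LGraph W
  K : LGraph W
  R : LGraph W
  L' : LGraph W
  K' : LGraph W
  l : K ⟶ L
  r : K ⟶ R
  l' : K' ⟶ L'
  tL : L ⟶ L'
  tK : K ⟶ K'

/-- A PBPO⁺ rewrite step `G_L ⇒_ρ^α G_R`, consisting of a monic match `m`, an
adherence morphism `α` making the match square a pullback, the pullback `G_K`
of `α` along `l'`, and the pushout `G_R` of `r` along `u`. -/
structure RewriteStep {W : Type} [Preorder W] (ρ : PBPORule W) (G₀ G₁ : LGraph W) :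
    Type 1 where
  m : ρ.L ⟶ G₀
  mono_m : Mono m
  α : G₀ ⟶ ρ.L'
  matchPB : IsPullback (𝟙 ρ.L) m ρ.tL α
  GK : LGraph W
  gL : GK ⟶ G₀
  u' : GK ⟶ ρ.K'
  pbK : IsPullback gL u' α ρ.l'
  u : ρ.K ⟶ GK
  u_u' : u ≫ u' = ρ.tK
  u_gL : u ≫ gL = ρ.l ≫ m
  w : ρ.R ⟶ G₁
  gR : GK ⟶ G₁
  po : IsPushout ρ.r u w gR

/-- `G ⇒_ρ H` : there exists a PBPO⁺ rewrite step from `G` to `H` via `ρ`. -/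
def PBPOStep {W : Type} [Preorder W] (ρ : PBPORule W) (G H : LGraph W) : Prop :=
  Nonempty (RewriteStep ρ G H)

/-- A match `m` establishes a match (of the rule `ρ`) if it is monic and some
adherence morphism makes the match square a pullback. -/
def EstablishesMatch {W : Type} [Preorder W] (ρ : PBPORule W) {G : LGraph W}
    (m : ρ.L ⟶ G) : Prop :=
  Mono m ∧ ∃ α : G ⟶ ρ.L', m ≫ α = ρ.tL ∧ IsPullback (𝟙 ρ.L) m ρ.tL α

section RuleEnc

variable {S : Type} {ar : S → ℕ} {X : Type}

/-- The morphism `l : K → L` of the rule encoding. -/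
noncomputable def encKtoL (ρ : TRSRule S ar X) : GLHom (interfaceG ρ.rhs) ρ.lhs.enc where
  onV v := match v with
    | .inl x => Sum.inr ⟨x.1, ρ.var_cond x.2⟩
    | .inr _ => ρ.lhs.encRoot
  onE e := e.elim
  src_comm e := e.elim
  tgt_comm e := e.elim
  lV_le v := by cases v <;> exact Flat.bot_le _
  lE_le e := e.elim

/-- The morphism `r : K → R` of the rule encoding. -/
noncomputable def encKtoR (ρ : TRSRule S ar X) : GLHom (interfaceG ρ.rhs) ρ.rhs.enc where
  onV v := match v with
    | .inl x => Sum.inr x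
    | .inr _ => ρ.rhs.encRoot
  onE e := e.elim
  src_comm e := e.elim
  tgt_comm e := e.elim
  lV_le v := by cases v <;> exact Flat.bot_le _
  lE_le e := e.elim

/-- Mapping the primed (lower-closure) vertices of `K'` to those of `L'`. -/
noncomputable def mapPrime (ρ : TRSRule S ar X) :
    ↥(interfaceVars ρ.rhs) → ↥(ρ.lhs.varHeads) :=
  fun x' => match x' with
  | ⟨.inl x, _⟩ => ⟨Sum.inr ⟨x.1, ρ.var_cond x.2⟩, ⟨⟨x.1, ρ.var_cond x.2⟩, rfl⟩⟩
  | ⟨.inr u, h⟩ => absurd h (by rintro ⟨y, hy⟩; cases hy)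

/-- The morphism `l' : K' → L'` of the rule encoding. -/
noncomputable def encl' (ρ : TRSRule S ar X) :
    GLHom (ctxCC (interfaceG ρ.rhs) (Sum.inr ()) (interfaceVars ρ.rhs))
      (ctxCC ρ.lhs.enc ρ.lhs.encRoot ρ.lhs.varHeads) where
  onV v := match v with
    | .inl (.inl (.inl x)) => .inl (.inl (Sum.inr ⟨x.1, ρ.var_cond x.2⟩))
    | .inl (.inl (.inr _)) => .inl (.inl ρ.lhs.encRoot)
    | .inl (.inr x') => .inl (.inr (mapPrime ρ x'))
    | .inr u => .inr u
  onE e := match e with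
    | .inl (.inl e) => e.elim
    | .inl (.inr (.inl x')) => .inl (.inr (.inl (mapPrime ρ x')))
    | .inl (.inr (.inr x')) => .inl (.inr (.inr (mapPrime ρ x')))
    | .inr b => .inr b
  src_comm := by
    rintro ((e | (⟨(x | u), hv⟩ | ⟨(x | u), hv⟩)) | b)
    · exact e.elim
    · rfl
    · exact absurd hv (by rintro ⟨y, hy⟩; cases hy)
    · rfl
    · exact absurd hv (by rintro ⟨y, hy⟩; cases hy)
    · rfl
  tgt_comm := by
    rintro ((e | (x' | x')) | b)
    · exact e.elim
    · rfl
    · rfl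
    · cases b <;> rfl
  lV_le := by
    rintro (((x | u) | x') | c)
    · refine Flat.le_cases (Or.inr ?_)
      exact (ctxCC_lV_inl ρ.lhs.enc ρ.lhs.encRoot ρ.lhs.varHeads
        (Sum.inr ⟨x.1, ρ.var_cond x.2⟩)).trans (if_pos ⟨⟨x.1, ρ.var_cond x.2⟩, rfl⟩)
    · refine Flat.le_cases (Or.inl ?_)
      exact (ctxCC_lV_inl (interfaceG ρ.rhs) (Sum.inr ()) (interfaceVars ρ.rhs)
        (Sum.inr u)).trans ((if_neg (by rintro ⟨y, hy⟩; cases hy)).trans rfl)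
    · exact Flat.le_cases (Or.inr rfl)
    · exact Flat.le_cases (Or.inr rfl)
  lE_le := by
    rintro ((e | (x' | x')) | b)
    · exact e.elim
    · exact Flat.le_cases (Or.inr rfl)
    · exact Flat.le_cases (Or.inr rfl)
    · exact Flat.le_cases (Or.inr rfl)

/-- The rule encoding `ρ°` of a term rewrite rule `ρ : l → r` as a PBPO⁺ rule. -/
noncomputable def ruleEnc (ρ : TRSRule S ar X) : PBPORule (FlatL S) where
  L := ρ.lhs.enc
  K := interfaceG ρ.rhs
  R := ρ.rhs.enc
  L' := ctxCC ρ.lhs.enc ρ.lhs.encRoot ρ.lhs.varHeads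
  K' := ctxCC (interfaceG ρ.rhs) (Sum.inr ()) (interfaceVars ρ.rhs)
  l := encKtoL ρ
  r := encKtoR ρ
  l' := encl' ρ
  tL := tCC ρ.lhs.enc ρ.lhs.encRoot ρ.lhs.varHeads
  tK := tCC (interfaceG ρ.rhs) (Sum.inr ()) (interfaceVars ρ.rhs)

/-- The rewrite relation of an encoded term rewriting system `R°`. -/
def SysStep (Rs : Set (TRSRule S ar X)) (G H : LGraph (FlatL S)) : Prop :=
  ∃ ρ ∈ Rs, PBPOStep (ruleEnc ρ) G H

end RuleEnc
section Cycles

variable {W : Type}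

/-- `IsUPath G u es v`: `es` is an undirected path from `u` to `v` in `G`. -/
def IsUPath (G : LGraph W) : G.V → List G.E → G.V → Prop
  | u, [], v => u = v
  | u, e :: es, v =>
      (G.src e = u ∧ IsUPath G (G.tgt e) es v) ∨ (G.tgt e = u ∧ IsUPath G (G.src e) es v)

/-- An undirected cycle at `v`: a nonempty undirected path from `v` to `v`
with pairwise distinct edges. -/
def IsUCycle (G : LGraph W) (v : G.V) (es : List G.E) : Prop :=
  es ≠ [] ∧ es.Nodup ∧ IsUPath G v es v

/-- A cycle edge is an edge lying on some undirected cycle. -/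
def CycleEdge (G : LGraph W) (e : G.E) : Prop :=
  ∃ v es, IsUCycle G v es ∧ e ∈ es

/-- A graph is cycle-free if it contains no undirected cycle. -/
def CycleFree (G : LGraph W) : Prop := ¬ ∃ v es, IsUCycle G v es

/-- `[G]`: the graph obtained from `G` by deleting all cycle edges. -/
def dropCycles (G : LGraph W) : LGraph W where
  V := G.V
  E := {e : G.E // ¬ CycleEdge G e}
  src e := G.src e.1
  tgt e := G.tgt e.1
  lV := G.lV
  lE e := G.lE e.1

end Cycles

section Zones

variable {S : Type}

/-- A vertex is in-well-formed if it has at most one incoming edge. -/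
def InWF (G : LGraph (FlatL S)) (v : G.V) : Prop :=
  ∀ e e' : G.E, G.tgt e = v → G.tgt e' = v → e = e'

/-- A vertex is out-well-formed if its label is a function symbol `f` and it
has exactly `ar f` outgoing edges, labeled `1, …, ar f`. -/
def OutWF (G : LGraph (FlatL S)) (ar : S → ℕ) (v : G.V) : Prop :=
  ∃ f : S, G.lV v = Flat.el (Sum.inl f) ∧
    ∃ φ : Fin (ar f) ≃ {e : G.E // G.src e = v},
      ∀ i, G.lE (φ i).1 = Flat.el (Sum.inr ⟨(i : ℕ) + 1, Nat.succ_pos _⟩)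

/-- A vertex is good if it is out-well-formed and all its children are
in-well-formed; otherwise it is bad. -/
def Good (G : LGraph (FlatL S)) (ar : S → ℕ) (v : G.V) : Prop :=
  OutWF G ar v ∧ ∀ e : G.E, G.src e = v → InWF G (G.tgt e)

/-- The edges included in a zone by the zoning algorithm are exactly the edges
with a good source. -/
def ZoneEdge (G : LGraph (FlatL S)) (ar : S → ℕ) (e : G.E) : Prop :=
  Good G ar (G.src e)

/-- One directed step along an edge included in a zone. -/
def ZStep (G : LGraph (FlatL S)) (ar : S → ℕ) (u v : G.V) : Prop :=
  ∃ e, ZoneEdge G ar e ∧ G.src e = u ∧ G.tgt e = v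

/-- Two vertices lie in the same zone iff they are connected by edges included
in zones (equivalence closure of `ZStep`). -/
def SameZone (G : LGraph (FlatL S)) (ar : S → ℕ) : G.V → G.V → Prop :=
  Relation.EqvGen (ZStep G ar)

/-- A root of a zone: a vertex with no parent inside its zone. -/
def IsZoneRoot (G : LGraph (FlatL S)) (ar : S → ℕ) (r : G.V) : Prop :=
  ¬ ∃ e, ZoneEdge G ar e ∧ G.tgt e = r

/-- A directed path along zone edges. -/
def IsZPath (G : LGraph (FlatL S)) (ar : S → ℕ) : G.V → List G.E → G.V → Prop
  | u, [], v => u = v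
  | u, e :: es, v => ZoneEdge G ar e ∧ G.src e = u ∧ IsZPath G ar (G.tgt e) es v

/-- The zone of `v₀`, as a subgraph of `G`, with every bad vertex relabeled
with `⊥`. -/
noncomputable def zoneTermGraph (G : LGraph (FlatL S)) (ar : S → ℕ) (v₀ : G.V) :
    LGraph (FlatL S) where
  V := {u : G.V // SameZone G ar u v₀}
  E := {e : G.E // ZoneEdge G ar e ∧ SameZone G ar (G.src e) v₀}
  src e := ⟨G.src e.1, e.2.2⟩
  tgt e := ⟨G.tgt e.1,
    Relation.EqvGen.trans _ _ _
      (Relation.EqvGen.symm _ _ (Relation.EqvGen.rel _ _ ⟨e.1, e.2.1, rfl, rfl⟩)) e.2.2⟩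
  lV u := if Good G ar u.1 then G.lV u.1 else Flat.bot
  lE e := G.lE e.1

end Zones

section Relabel

variable {W : Type}

/-- `G` with the label of vertex `v` changed to `l`. -/
noncomputable def relabelV (G : LGraph W) (v : G.V) (l : W) : LGraph W :=
  { G with lV := Function.update G.lV v l }

/-- `G` with the label of every vertex in `s` changed to `l`. -/
noncomputable def relabelSet (G : LGraph W) (s : Set G.V) (l : W) : LGraph W :=
  { G with lV := fun u => if u ∈ s then l else G.lV u }

end Relabel

/-!
A match of `l°` in `s°` is determined by the image of the root: term encodings are trees whose
edges are determined by their source and label, and morphisms preserve edge labels.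
The adherence morphism `α` is then determined as well. On the image of the match it is forced by
`α ∘ m = t_L`. Off the image, the pullback condition sends every edge of `s°` to a context edge of
`C[l°↓]`, and a context edge is determined by its source unless it is the edge into the root of
`l°`; so `α` propagates down from the root of `s°`. That root is sent to the context vertex `C`,
because the only context edges into `C` or into the root of `l°` start at `C`, and the match root
is reached from the root of `s°`.
With `m` and `α` fixed, `G_K` and `G_R` are a pullback and a pushout of the same diagrams, hence
unique up to isomorphism.
-/

instance (A : Type) : OrderBot (Flat A) where
  bot := Flat.bot
  bot_le := Flat.bot_le

section Hom

variable {W : Type} [Preorder W] {G H : LGraph W}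

theorem src_homE (f : G ⟶ H) (e : G.E) : H.src (homE f e) = homV f (G.src e) := f.src_comm e

theorem tgt_homE (f : G ⟶ H) (e : G.E) : H.tgt (homE f e) = homV f (G.tgt e) := f.tgt_comm e

variable {L L' : LGraph W} {m : L ⟶ G} {tL : L ⟶ L'} {α : G ⟶ L'}

theorem homV_map_of_isPullback (hpb : IsPullback (𝟙 L) m tL α) (w : L.V) :
    homV α (homV m w) = homV tL w :=
  (congrFun (congrArg GLHom.onV hpb.w) w).symm

theorem homE_map_of_isPullback (hpb : IsPullback (𝟙 L) m tL α) (ε : L.E) :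
    homE α (homE m ε) = homE tL ε :=
  (congrFun (congrArg GLHom.onE hpb.w) ε).symm

end Hom

section PullbackReflection

variable (W : Type) [Preorder W] [OrderBot W]

/- Test graphs: with bottom labels they map anywhere, so they probe the universal property of a
pullback one vertex or one edge at a time. -/
def vertexGraph : LGraph W where
  V := Unit
  E := Empty
  src := Empty.elim
  tgt := Empty.elim
  lV _ := ⊥
  lE := Empty.elim

def edgeGraph : LGraph W where
  V := Bool
  E := Unit
  src _ := false
  tgt _ := true
  lV _ := ⊥
  lE _ := ⊥

variable {W}

def vertexGraph.hom {H : LGraph W} (v : H.V) : vertexGraph W ⟶ H where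
  onV _ := v
  onE := Empty.elim
  src_comm := Empty.rec
  tgt_comm := Empty.rec
  lV_le _ := bot_le
  lE_le := Empty.rec

def edgeGraph.hom {H : LGraph W} (e : H.E) : edgeGraph W ⟶ H where
  onV b := bif b then H.tgt e else H.src e
  onE _ := e
  src_comm _ := rfl
  tgt_comm _ := rfl
  lV_le _ := bot_le
  lE_le _ := bot_le

variable {L G L' : LGraph W} {m : L ⟶ G} {tL : L ⟶ L'} {α : G ⟶ L'}

theorem homV_mem_range_iff_of_isPullback (hpb : IsPullback (𝟙 L) m tL α) {v : G.V} :
    homV α v ∈ Set.range (homV tL) ↔ v ∈ Set.range (homV m) := by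
  refine ⟨fun ⟨w, hw⟩ => ⟨w, ?_⟩, fun ⟨w, hw⟩ => ⟨w, hw ▸ (homV_map_of_isPullback hpb w).symm⟩⟩
  have comm : vertexGraph.hom w ≫ tL = vertexGraph.hom v ≫ α :=
    GLHom.ext' (funext fun _ => hw) (funext fun e => nomatch e)
  have h := hpb.lift_snd _ _ comm
  rw [← Category.comp_id (hpb.lift _ _ comm), hpb.lift_fst] at h
  exact congrFun (congrArg GLHom.onV h) ()

theorem homE_mem_range_iff_of_isPullback (hpb : IsPullback (𝟙 L) m tL α) {e : G.E} :
    homE α e ∈ Set.range (homE tL) ↔ e ∈ Set.range (homE m) := by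
  refine ⟨fun ⟨ε, hε⟩ => ⟨ε, ?_⟩, fun ⟨ε, hε⟩ => ⟨ε, hε ▸ (homE_map_of_isPullback hpb ε).symm⟩⟩
  have comm : edgeGraph.hom ε ≫ tL = edgeGraph.hom e ≫ α := by
    refine GLHom.ext' (funext fun b => ?_) (funext fun _ => hε)
    cases b
    · exact (src_homE tL ε).symm.trans ((congrArg L'.src hε).trans (src_homE α e))
    · exact (tgt_homE tL ε).symm.trans ((congrArg L'.tgt hε).trans (tgt_homE α e))
  have h := hpb.lift_snd _ _ comm
  rw [← Category.comp_id (hpb.lift _ _ comm), hpb.lift_fst] at h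
  exact congrFun (congrArg GLHom.onE h) ()

end PullbackReflection

theorem RewriteStep.nonempty_iso_of_eq {W : Type} [Preorder W] {ρ : PBPORule W}
    {G₀ G₁ G₁' : LGraph W} (st : RewriteStep ρ G₀ G₁) (st' : RewriteStep ρ G₀ G₁')
    (hm : st.m = st'.m) (hα : st.α = st'.α) : Nonempty (G₁ ≅ G₁') := by
  have pbK' : IsPullback st'.gL st'.u' st.α ρ.l' := hα ▸ st'.pbK
  let φ := st.pbK.isoIsPullback _ _ pbK'
  have hu : st.u ≫ φ.hom = st'.u := pbK'.hom_ext
    (by simp [φ, st.u_gL, st'.u_gL, hm]) (by simp [φ, st.u_u', st'.u_u'])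
  have po : IsPushout ρ.r st.u st'.w (φ.hom ≫ st'.gR) :=
    st'.po.of_iso (Iso.refl _) (Iso.refl _) φ.symm (Iso.refl _)
      (by simp) (by simp [← hu]) (by simp) (by simp)
  exact ⟨st.po.isoIsPushout _ _ po⟩

namespace Term

variable {S : Type} {ar : S → ℕ} {X : Type} {t : Term S ar X}

theorem symAt_eq_none_of_sub? {p : List ℕ} {x : X} (h : t.sub? p = some (.var x)) :
    t.symAt p = none := by
  simp [symAt, h, head?]

theorem encVertAt_unique {p : List ℕ} {v v' : t.encV} (hv : t.encVertAt p v)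
    (hv' : t.encVertAt p v') : v = v' := by
  rcases v with ⟨q, hq⟩ | ⟨x, hx⟩ <;> rcases v' with ⟨q', hq'⟩ | ⟨x', hx'⟩ <;>
    simp only [encVertAt] at hv hv' <;> subst_vars
  · rfl
  · simp [symAt_eq_none_of_sub? hv'] at hq
  · simp [symAt_eq_none_of_sub? hv] at hq'
  · cases hv.symm.trans hv'
    rfl

theorem encVertAt_encRoot (t : Term S ar X) : t.encVertAt [] t.encRoot := by
  by_cases h : (t.symAt []).isSome
  · rw [show t.encRoot = Sum.inl ⟨[], h⟩ from dif_pos h]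
    rfl
  · rw [show t.encRoot = _ from dif_neg h]
    exact Classical.choose_spec (t.root_var h)

theorem encVertAt_tgt (t : Term S ar X) (e : t.encE) :
    t.encVertAt (e.1.1 ++ [e.1.2]) (t.enc.tgt e) := by
  change t.encVertAt _ (t.encTgt e)
  by_cases h : (t.symAt (e.1.1 ++ [e.1.2])).isSome
  · rw [show t.encTgt e = Sum.inl ⟨_, h⟩ from dif_pos h]
    rfl
  · rw [show t.encTgt e = _ from dif_neg h]
    exact Classical.choose_spec (t.edge_tgt_var e.2 h)

theorem exists_symAt_of_encVertAt {q : List ℕ} {i : ℕ} {v : t.encV}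
    (hv : t.encVertAt (q ++ [i]) v) : ∃ f, t.symAt q = some f ∧ i < ar f := by
  obtain ⟨u, hu⟩ : ∃ u, t.sub? (q ++ [i]) = some u := by
    rcases v with ⟨q', hq'⟩ | x
    · simp only [encVertAt] at hv
      subst hv
      exact Option.isSome_iff_exists.mp (Option.isSome_of_isSome_bind hq')
    · exact ⟨_, hv⟩
  rw [sub?_append] at hu
  rcases hq : t.sub? q with _ | (y | ⟨f, ts⟩) <;> rw [hq] at hu
  · simp at hu
  · simp [sub?] at hu
  · refine ⟨f, by simp [symAt, hq, head?], ?_⟩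
    by_contra hi
    simp [sub?, hi] at hu

/-- For a variable head of a nonlinear term this is just one of its positions. -/
def posOfV (t : Term S ar X) : t.encV → List ℕ
  | .inl q => q.1
  | .inr x => Classical.choose x.2

theorem encVertAt_posOfV (t : Term S ar X) (v : t.encV) : t.encVertAt (t.posOfV v) v := by
  rcases v with q | x
  · rfl
  · exact Classical.choose_spec x.2

theorem exists_parent {v : t.encV} (hv : v ≠ t.encRoot) :
    ∃ e : t.encE, t.enc.tgt e = v ∧ (t.posOfV (t.enc.src e)).length < (t.posOfV v).length := by
  have hat := t.encVertAt_posOfV v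
  rcases List.eq_nil_or_concat (t.posOfV v) with h0 | ⟨q, i, hqi⟩
  · rw [h0] at hat
    exact absurd (encVertAt_unique hat t.encVertAt_encRoot) hv
  · rw [hqi, List.concat_eq_append] at hat ⊢
    obtain ⟨f, hf, hi⟩ := exists_symAt_of_encVertAt hat
    exact ⟨⟨(q, i), f, hf, hi⟩, encVertAt_unique (t.encVertAt_tgt _) hat, by simp [enc, posOfV]⟩

theorem enc_induction {P : t.encV → Prop} (root : P t.encRoot)
    (step : ∀ e, P (t.enc.src e) → P (t.enc.tgt e)) (v : t.encV) : P v := by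
  induction hn : (t.posOfV v).length using Nat.strong_induction_on generalizing v with
  | _ n ih =>
    by_cases hv : v = t.encRoot
    · exact hv ▸ root
    · obtain ⟨e, rfl, hlt⟩ := exists_parent hv
      exact step e (ih _ (hn ▸ hlt) _ rfl)

theorem enc_induction_up {P : t.encV → Prop} {v : t.encV} (hv : P v)
    (step : ∀ e, P (t.enc.tgt e) → P (t.enc.src e)) : P t.encRoot := by
  induction hn : (t.posOfV v).length using Nat.strong_induction_on generalizing v with
  | _ n ih =>
    by_cases hroot : v = t.encRoot
    · exact hroot ▸ hv
    · obtain ⟨e, rfl, hlt⟩ := exists_parent hroot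
      exact ih _ (hn ▸ hlt) (step e hv) rfl

theorem enc_tgt_ne_encRoot (ht : ∀ x, t ≠ .var x) (e : t.encE) : t.enc.tgt e ≠ t.encRoot := by
  intro h
  have hat := t.encVertAt_tgt e
  rw [h] at hat
  cases t with
  | var x => exact ht x rfl
  | app f ts => simp [encRoot, symAt, sub?, head?, encVertAt] at hat

variable {l s : Term S ar X}

theorem enc_hom_index (m : l.enc ⟶ s.enc) (ε : l.enc.E) : (homE m ε).1.2 = ε.1.2 := by
  have h : Flat.el _ ≤ Flat.el _ := m.lE_le ε
  simpa using (congrArg Subtype.val (Sum.inr.inj h)).symm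

theorem enc_hom_onE_eq (m m' : l.enc ⟶ s.enc) {ε : l.enc.E}
    (h : homV m (l.enc.src ε) = homV m' (l.enc.src ε)) : homE m ε = homE m' ε := by
  have hsrc : s.enc.src (homE m ε) = s.enc.src (homE m' ε) := by
    rw [src_homE, src_homE]
    exact h
  refine Subtype.ext (Prod.ext ?_ ?_)
  · exact congrArg Subtype.val (Sum.inl.inj hsrc)
  · rw [enc_hom_index, enc_hom_index]

theorem enc_hom_ext (m m' : l.enc ⟶ s.enc) (h : homV m l.encRoot = homV m' l.encRoot) :
    m = m' := by
  have hV : ∀ v, homV m v = homV m' v := enc_induction h fun ε hε => by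
    rw [← tgt_homE, ← tgt_homE, enc_hom_onE_eq m m' hε]
  exact GLHom.ext' (funext hV) (funext fun ε => enc_hom_onE_eq m m' (hV _))

end Term

section CtxClosure

variable {A : Type} {G : LGraph (Flat A)} {r : G.V} {Xs : Set G.V}
  {ε ε' : (ctxCC G r Xs).E}

theorem ctxCC_edge_eq_of_src_eq_of_tgt_eq (hε : ε ∉ Set.range (tCC G r Xs).onE)
    (hε' : ε' ∉ Set.range (tCC G r Xs).onE)
    (hs : (ctxCC G r Xs).src ε = (ctxCC G r Xs).src ε')
    (ht : (ctxCC G r Xs).tgt ε = (ctxCC G r Xs).tgt ε') : ε = ε' := by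
  rcases ε with (e | (x | x)) | (_ | _)
  · exact absurd ⟨e, rfl⟩ hε
  all_goals rcases ε' with (e' | (x' | x')) | (_ | _)
  all_goals first
    | exact absurd ⟨_, rfl⟩ hε'
    | simp_all [ctxCC, upperCC, lowerCC, Subtype.ext_iff]

theorem ctxCC_edge_eq_of_src_eq (hs : (ctxCC G r Xs).src ε = (ctxCC G r Xs).src ε')
    (ht : (ctxCC G r Xs).tgt ε ∉ Set.range (tCC G r Xs).onV)
    (ht' : (ctxCC G r Xs).tgt ε' ∉ Set.range (tCC G r Xs).onV) : ε = ε' := by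
  rcases ε with (e | (x | x)) | (_ | _) <;> rcases ε' with (e' | (x' | x')) | (_ | _)
  all_goals first
    | exact absurd ⟨_, rfl⟩ ht
    | exact absurd ⟨_, rfl⟩ ht'
    | exact absurd ⟨r, rfl⟩ ht'
    | simp_all [ctxCC, upperCC, lowerCC, Subtype.ext_iff]

theorem ctxCC_src_eq_of_tgt (hε : ε ∉ Set.range (tCC G r Xs).onE)
    (ht : (ctxCC G r Xs).tgt ε = Sum.inr () ∨ (ctxCC G r Xs).tgt ε = (tCC G r Xs).onV r) :
    (ctxCC G r Xs).src ε = Sum.inr () := by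
  rcases ε with (e | (x | x)) | (_ | _)
  · exact absurd ⟨e, rfl⟩ hε
  all_goals simp_all [ctxCC, upperCC, lowerCC, tCC]

end CtxClosure

section Adherence

open Term

variable {S : Type} {ar : S → ℕ} {X : Type} {l s : Term S ar X}

theorem adherence_src_eq_of_tgt (hl : ∀ x, l ≠ .var x)
    (α : s.enc ⟶ ctxCC l.enc l.encRoot l.varHeads) (e : s.enc.E)
    (h : homV α (s.enc.tgt e) = Sum.inr () ∨
      homV α (s.enc.tgt e) = (tCC l.enc l.encRoot l.varHeads).onV l.encRoot) :
    homV α (s.enc.src e) = Sum.inr () := by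
  rw [← tgt_homE] at h
  rw [← src_homE]
  refine ctxCC_src_eq_of_tgt ?_ h
  rintro ⟨ε, hε⟩
  rw [← hε] at h
  simp only [tCC, ctxCC, upperCC, lowerCC] at h
  exact enc_tgt_ne_encRoot hl ε (Sum.inl.inj (by simpa using h))

theorem adherence_encRoot (hl : ∀ x, l ≠ .var x) {m : l.enc ⟶ s.enc}
    {α : s.enc ⟶ ctxCC l.enc l.encRoot l.varHeads}
    (hpb : IsPullback (𝟙 l.enc) m (tCC l.enc l.encRoot l.varHeads) α)
    (hroot : s.encRoot ∉ Set.range (homV m)) : homV α s.encRoot = Sum.inr () := by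
  have h := enc_induction_up
    (P := fun v => homV α v = Sum.inr () ∨
      homV α v = (tCC l.enc l.encRoot l.varHeads).onV l.encRoot)
    (Or.inr (homV_map_of_isPullback hpb l.encRoot))
    (fun e he => Or.inl (adherence_src_eq_of_tgt hl α e he))
  exact h.resolve_right fun h => hroot ((homV_mem_range_iff_of_isPullback hpb).1 ⟨_, h.symm⟩)

theorem adherence_unique (hl : ∀ x, l ≠ .var x) {m : l.enc ⟶ s.enc}
    {α α' : s.enc ⟶ ctxCC l.enc l.encRoot l.varHeads}
    (hpb : IsPullback (𝟙 l.enc) m (tCC l.enc l.encRoot l.varHeads) α)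
    (hpb' : IsPullback (𝟙 l.enc) m (tCC l.enc l.encRoot l.varHeads) α') : α = α' := by
  have on_range : ∀ v ∈ Set.range (homV m), homV α v = homV α' v := by
    rintro _ ⟨w, rfl⟩
    exact (homV_map_of_isPullback hpb w).trans (homV_map_of_isPullback hpb' w).symm
  have hV : ∀ v, homV α v = homV α' v := by
    refine enc_induction ?_ fun e he => ?_
    · by_cases hr : s.encRoot ∈ Set.range (homV m)
      · exact on_range _ hr
      · rw [adherence_encRoot hl hpb hr, adherence_encRoot hl hpb' hr]
    · by_cases ht : s.enc.tgt e ∈ Set.range (homV m)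
      · exact on_range _ ht
      have tgt_out : ∀ β : s.enc ⟶ ctxCC l.enc l.encRoot l.varHeads,
          IsPullback (𝟙 l.enc) m (tCC l.enc l.encRoot l.varHeads) β →
          (ctxCC l.enc l.encRoot l.varHeads).tgt (homE β e) ∉
            Set.range (tCC l.enc l.encRoot l.varHeads).onV := fun β hβ => by
        rw [tgt_homE]
        exact mt (homV_mem_range_iff_of_isPullback hβ).1 ht
      rw [← tgt_homE, ← tgt_homE, ctxCC_edge_eq_of_src_eq (by rw [src_homE, src_homE, he])
        (tgt_out α hpb) (tgt_out α' hpb')]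
  refine GLHom.ext' (funext hV) (funext fun e => ?_)
  by_cases he : e ∈ Set.range (homE m)
  · obtain ⟨ε, rfl⟩ := he
    exact (homE_map_of_isPullback hpb ε).trans (homE_map_of_isPullback hpb' ε).symm
  · exact ctxCC_edge_eq_of_src_eq_of_tgt_eq
      (mt (homE_mem_range_iff_of_isPullback hpb).1 he)
      (mt (homE_mem_range_iff_of_isPullback hpb').1 he)
      (by rw [src_homE, src_homE, hV]) (by rw [tgt_homE, tgt_homE, hV])

end Adherence

theorem statement_2_general {S : Type} {ar : S → ℕ} {X : Type}
    (ρ : TRSRule S ar X) (s : Term S ar X)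
    (p : List ℕ) (G G' : LGraph (FlatL S))
    (st : RewriteStep (ruleEnc ρ) s.enc G) (st' : RewriteStep (ruleEnc ρ) s.enc G')
    (h : s.encVertAt p (homV st.m ρ.lhs.encRoot))
    (h' : s.encVertAt p (homV st'.m ρ.lhs.encRoot)) :
    Nonempty (G ≅ G') := by
  have hm : st.m = st'.m := Term.enc_hom_ext st.m st'.m (Term.encVertAt_unique h h')
  have hα : st.α = st'.α := adherence_unique ρ.lhs_not_var st.matchPB (hm ▸ st'.matchPB)
  exact st.nonempty_iso_of_eq st' hm hα

/-- Match determinism. If the rule encoding `ρ°` of a linear term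
rewrite rule is applied at position `p` in the term encoding `s°`, giving rise
to PBPO⁺ rewrite steps `s° ⇒ G` and `s° ⇒ G'` (both at position `p`), then
`G ≅ G'`. -/
theorem statement_2 {S : Type} {ar : S → ℕ} {X : Type}
    (ρ : TRSRule S ar X) (hρ : ρ.Linear) (s : Term S ar X) (hs : s.Linear)
    (p : List ℕ) (G G' : LGraph (FlatL S))
    (st : RewriteStep (ruleEnc ρ) s.enc G) (st' : RewriteStep (ruleEnc ρ) s.enc G')
    (h : s.encVertAt p (homV st.m ρ.lhs.encRoot))
    (h' : s.encVertAt p (homV st'.m ρ.lhs.encRoot)) :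
    Nonempty (G ≅ G') :=
  statement_2_general ρ s p G G' st st' h h'
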